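/- Let (γ, ℓ, ℓ⁽²⁾, Y) be coordinate hypersurface data on U with inverse blocks (P, n, n⁽²⁾) and derived fields F, U, Γ̊, Γ̄. Then the following identities hold on U: (1) ∇̊_aℓ_b = F_{ab} − ℓ⁽²⁾U_{ab}; (2) ∇̊_aγ_{bc} = −ℓ_bU_{ac} − ℓ_cU_{ab}; (3) ∇̊_aP^{bc} = −(n^bP^{cf} + n^cP^{bf})F_{af} − n^bn^c∂_aℓ⁽²⁾; (4) ∇̊_an^b = −n⁽²⁾n^b∂_aℓ⁽²⁾ − (n⁽²⁾P^{bf} + n^bn^f)F_{af} + P^{bf}U_{af}; (5) for every smooth symmetric field Z_{ab}: ∇̄_dZ_{bc} − ∇̄_cZ_{bd} = ∇̊_dZ_{bc} − ∇̊_cZ_{bd} + n^f(Y_{bd}Z_{fc} − Y_{bc}Z_{fd}). -/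

import Mathlib

open scoped BigOperators

noncomputable section

namespace HypData

variable {m : ℕ}

/-- Scalar field on ℝ^m. -/
abbrev Sc (m : ℕ) := (Fin m → ℝ) → ℝ
/-- One-index field. -/
abbrev Vec (m : ℕ) := (Fin m → ℝ) → Fin m → ℝ
/-- Two-index field. -/
abbrev Ten (m : ℕ) := (Fin m → ℝ) → Fin m → Fin m → ℝ
/-- Connection coefficients `Γ x c a b = Γ^c_{ab}` (first index upper). -/
abbrev Conn (m : ℕ) := (Fin m → ℝ) → Fin m → Fin m → Fin m → ℝ
/-- Three-index field. -/
abbrev Ten3 (m : ℕ) := (Fin m → ℝ) → Fin m → Fin m → Fin m → ℝ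

/-- Partial derivative of `f` in the `a`-th coordinate direction at `x`. -/
def pd (a : Fin m) (f : Sc m) (x : Fin m → ℝ) : ℝ :=
  fderiv ℝ f x (Pi.single a 1)

/-- Kronecker delta. -/
def kd (a b : Fin m) : ℝ := if a = b then 1 else 0

/-- Equations (EqP1)-(EqP4): `[[P,n],[nᵀ,n2]]` consists of the inverse blocks of
the block matrix `[[γ,ℓ],[ℓᵀ,ℓ2]]`. -/
def InvBlocks (γ : Fin m → Fin m → ℝ) (ℓ : Fin m → ℝ) (ℓ2 : ℝ)
    (P : Fin m → Fin m → ℝ) (n : Fin m → ℝ) (n2 : ℝ) : Prop :=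
  (∀ a b, (∑ c, P a c * γ c b) + n a * ℓ b = kd a b) ∧
  (∀ a, (∑ b, P a b * ℓ b) + ℓ2 * n a = 0) ∧
  ((∑ a, n a * ℓ a) + n2 * ℓ2 = 1) ∧
  (∀ a, (∑ b, γ a b * n b) + n2 * ℓ a = 0)

/-- ∇_a ω_b. -/
def covD1 (Γ : Conn m) (ω : Vec m) (x : Fin m → ℝ) (a b : Fin m) : ℝ :=
  pd a (fun y => ω y b) x - ∑ d, Γ x d a b * ω x d

/-- ∇_a X^b. -/
def covD1U (Γ : Conn m) (X : Vec m) (x : Fin m → ℝ) (a b : Fin m) : ℝ :=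
  pd a (fun y => X y b) x + ∑ d, Γ x b a d * X x d

/-- ∇_a T_{bc}. -/
def covD2 (Γ : Conn m) (T : Ten m) (x : Fin m → ℝ) (a b c : Fin m) : ℝ :=
  pd a (fun y => T y b c) x - (∑ d, Γ x d a b * T x d c) - (∑ d, Γ x d a c * T x b d)

/-- ∇_a T^{bc}. -/
def covD2U (Γ : Conn m) (T : Ten m) (x : Fin m → ℝ) (a b c : Fin m) : ℝ :=
  pd a (fun y => T y b c) x + (∑ d, Γ x b a d * T x d c) + (∑ d, Γ x c a d * T x b d)

/-- ∇_a S^b_c (first index of `S` upper, second lower). -/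
def covD11 (Γ : Conn m) (S : Ten m) (x : Fin m → ℝ) (a b c : Fin m) : ℝ :=
  pd a (fun y => S y b c) x + (∑ d, Γ x b a d * S x d c) - (∑ d, Γ x d a c * S x b d)

/-- ∇_a Q^{bcd}. -/
def covD3U (Γ : Conn m) (Q : Ten3 m) (x : Fin m → ℝ) (a b c d : Fin m) : ℝ :=
  pd a (fun y => Q y b c d) x + (∑ f, Γ x b a f * Q x f c d)
    + (∑ f, Γ x c a f * Q x b f d) + (∑ f, Γ x d a f * Q x b c f)

/-- Curvature `R^a_{bcd} = ∂_cΓ^a_{db} − ∂_dΓ^a_{cb} + Γ^a_{cf}Γ^f_{db} − Γ^a_{df}Γ^f_{cb}`. -/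
def curv (Γ : Conn m) (x : Fin m → ℝ) (a b c d : Fin m) : ℝ :=
  pd c (fun y => Γ y a d b) x - pd d (fun y => Γ y a c b) x
    + (∑ f, Γ x a c f * Γ x f d b) - (∑ f, Γ x a d f * Γ x f c b)

/-- `F_{ab} = ½(∂_aℓ_b − ∂_bℓ_a)`. -/
def Ff (ℓ : Vec m) (x : Fin m → ℝ) (a b : Fin m) : ℝ :=
  (pd a (fun y => ℓ y b) x - pd b (fun y => ℓ y a) x) / 2

/-- `U_{ab} = ½(n^c∂_cγ_{ab} + γ_{cb}∂_an^c + γ_{ac}∂_bn^c + ℓ_a∂_bn⁽²⁾ + ℓ_b∂_an⁽²⁾)`. -/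
def Uf (γ : Ten m) (ℓ : Vec m) (n : Vec m) (n2 : Sc m)
    (x : Fin m → ℝ) (a b : Fin m) : ℝ :=
  ((∑ c, (n x c * pd c (fun y => γ y a b) x + γ x c b * pd a (fun y => n y c) x
      + γ x a c * pd b (fun y => n y c) x))
    + ℓ x a * pd b n2 x + ℓ x b * pd a n2 x) / 2

/-- Metric hypersurface connection `Γ̊^c_{ab}`. -/
def Gam0 (γ : Ten m) (ℓ : Vec m) (P : Ten m) (n : Vec m)
    (x : Fin m → ℝ) (c a b : Fin m) : ℝ :=
  (∑ d, P x c d * (pd a (fun y => γ y b d) x + pd b (fun y => γ y a d) x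
      - pd d (fun y => γ y a b) x)) / 2
  + n x c * (pd a (fun y => ℓ y b) x + pd b (fun y => ℓ y a) x) / 2

/-- The connection `Γ̄^c_{ab} = Γ̊^c_{ab} − n^c Y_{ab}`. -/
def GamB (γ : Ten m) (ℓ : Vec m) (P : Ten m) (n : Vec m) (Y : Ten m)
    (x : Fin m → ℝ) (c a b : Fin m) : ℝ :=
  Gam0 γ ℓ P n x c a b - n x c * Y x a b

/-- `K_{ab} = n⁽²⁾Y_{ab} + U_{ab}`. -/
def Kf (γ : Ten m) (ℓ : Vec m) (n : Vec m) (n2 : Sc m) (Y : Ten m)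
    (x : Fin m → ℝ) (a b : Fin m) : ℝ :=
  n2 x * Y x a b + Uf γ ℓ n n2 x a b

/-- `φ_a = ½n⁽²⁾∂_aℓ⁽²⁾ + n^b(Y_{ab} + F_{ab})`. -/
def phif (ℓ : Vec m) (ℓ2 : Sc m) (n : Vec m) (n2 : Sc m) (Y : Ten m)
    (x : Fin m → ℝ) (a : Fin m) : ℝ :=
  n2 x * pd a ℓ2 x / 2 + ∑ b, n x b * (Y x a b + Ff ℓ x a b)

/-- `Ψ^b_a = P^{bc}(Y_{ac} + F_{ac}) + ½n^b∂_aℓ⁽²⁾`. -/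
def Psif (ℓ : Vec m) (ℓ2 : Sc m) (P : Ten m) (n : Vec m) (Y : Ten m)
    (x : Fin m → ℝ) (b a : Fin m) : ℝ :=
  (∑ c, P x b c * (Y x a c + Ff ℓ x a c)) + n x b * pd a ℓ2 x / 2

/-- Smoothness of a scalar field on `U`. -/
def SmSc (U : Set (Fin m → ℝ)) (f : Sc m) : Prop := ContDiffOn ℝ (⊤ : ℕ∞) f U
/-- Smoothness of a one-index field on `U`. -/
def SmVec (U : Set (Fin m → ℝ)) (f : Vec m) : Prop :=
  ∀ a, ContDiffOn ℝ (⊤ : ℕ∞) (fun x => f x a) U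
/-- Smoothness of a two-index field on `U`. -/
def SmTen (U : Set (Fin m → ℝ)) (f : Ten m) : Prop :=
  ∀ a b, ContDiffOn ℝ (⊤ : ℕ∞) (fun x => f x a b) U

/-- Smooth coordinate hypersurface metric data on `U`. -/
def MetricData (U : Set (Fin m → ℝ)) (γ : Ten m) (ℓ : Vec m) (ℓ2 : Sc m)
    (P : Ten m) (n : Vec m) (n2 : Sc m) : Prop :=
  SmTen U γ ∧ SmVec U ℓ ∧ SmSc U ℓ2 ∧ SmTen U P ∧ SmVec U n ∧ SmSc U n2 ∧
  (∀ x ∈ U, ∀ a b, γ x a b = γ x b a) ∧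
  (∀ x ∈ U, ∀ a b, P x a b = P x b a) ∧
  (∀ x ∈ U, InvBlocks (γ x) (ℓ x) (ℓ2 x) (P x) (n x) (n2 x))

/-- Gauge-transformed `ℓ`. -/
def gaugeL (γ : Ten m) (ℓ : Vec m) (u : Sc m) (V : Vec m) : Vec m :=
  fun x a => u x * (ℓ x a + ∑ b, V x b * γ x a b)

/-- Gauge-transformed `ℓ⁽²⁾`. -/
def gaugeL2 (γ : Ten m) (ℓ : Vec m) (ℓ2 : Sc m) (u : Sc m) (V : Vec m) : Sc m :=
  fun x => u x ^ 2 * (ℓ2 x + 2 * (∑ a, V x a * ℓ x a) + ∑ a, ∑ b, V x a * V x b * γ x a b)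

/-- Gauge-transformed `Y`. -/
def gaugeY (γ : Ten m) (ℓ : Vec m) (Y : Ten m) (u : Sc m) (V : Vec m) : Ten m :=
  fun x a b => u x * Y x a b + (ℓ x a * pd b u x + ℓ x b * pd a u x) / 2
    + ((u x * ∑ c, V x c * pd c (fun y => γ y a b) x)
      + (∑ c, γ x c b * pd a (fun y => u y * V y c) x)
      + (∑ c, γ x a c * pd b (fun y => u y * V y c) x)) / 2

/-- Gauge-transformed `P`. -/
def gaugeP (P : Ten m) (n : Vec m) (n2 : Sc m) (V : Vec m) : Ten m :=
  fun x a b => P x a b + n2 x * V x a * V x b - V x a * n x b - V x b * n x a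

/-- Gauge-transformed `n`. -/
def gaugeN (n : Vec m) (n2 : Sc m) (u : Sc m) (V : Vec m) : Vec m :=
  fun x a => (u x)⁻¹ * (n x a - n2 x * V x a)

/-- Gauge-transformed `n⁽²⁾`. -/
def gaugeN2 (n2 : Sc m) (u : Sc m) : Sc m :=
  fun x => ((u x) ^ 2)⁻¹ * n2 x

/-- Shell energy-momentum tensor `τ^{fa}` built pointwise from the jump `V_{ab}`. -/
def tauP (P : Fin m → Fin m → ℝ) (n : Fin m → ℝ) (n2 : ℝ) (V : Fin m → Fin m → ℝ)
    (f a : Fin m) : ℝ :=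
  (∑ c, ∑ d, (n f * P a c + n a * P f c) * n d * V c d)
  - (∑ c, ∑ d, (n2 * P f c * P a d + P f a * n c * n d) * V c d)
  + (n2 * P f a - n f * n a) * (∑ c, ∑ d, P c d * V c d)

/-- `τ^f_c = −(n⁽²⁾P^{bd} − n^bn^d)(δ^f_dV_{bc} − δ^f_cV_{bd})`. -/
def tauMixP (P : Fin m → Fin m → ℝ) (n : Fin m → ℝ) (n2 : ℝ)
    (V : Fin m → Fin m → ℝ) (f c : Fin m) : ℝ :=
  -(∑ b, ∑ d, (n2 * P b d - n b * n d) * (kd f d * V b c - kd f c * V b d))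

/-- `T^f = (P^{bf}n^c − P^{bc}n^f)V_{bc}`. -/
def tauVecP (P : Fin m → Fin m → ℝ) (n : Fin m → ℝ) (V : Fin m → Fin m → ℝ)
    (f : Fin m) : ℝ :=
  ∑ b, ∑ c, (P b f * n c - P b c * n f) * V b c

/-- The block matrix 𝔸. -/
def blockA (γ : Ten m) (ℓ : Vec m) (ℓ2 : Sc m) (x : Fin m → ℝ) :
    Matrix (Fin m ⊕ Unit) (Fin m ⊕ Unit) ℝ :=
  fun i j =>
    match i, j with
    | Sum.inl a, Sum.inl b => γ x a b
    | Sum.inl a, Sum.inr _ => ℓ x a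
    | Sum.inr _, Sum.inl b => ℓ x b
    | Sum.inr _, Sum.inr _ => ℓ2 x

/-- `det 𝔸` as a scalar field. -/
def detA (γ : Ten m) (ℓ : Vec m) (ℓ2 : Sc m) (x : Fin m → ℝ) : ℝ :=
  (blockA γ ℓ ℓ2 x).det

end HypData

/-!
Write `Γ̊^c_{ab} = P^{cd}Γ_{abd} + n^c∂_{(a}ℓ_{b)}`, with `Γ_{abd}` the Christoffel symbols of the
first kind of `γ`. Differentiating `γ_{bd}n^d + n⁽²⁾ℓ_b = 0` gives
`n^dΓ_{abd} + n⁽²⁾∂_{(a}ℓ_{b)} = −U_{ab}`, so the inverse-block relations turn the contractions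
into `Γ̊^d_{ab}γ_{dc} = Γ_{abc} + ℓ_cU_{ab}` and `Γ̊^d_{ab}ℓ_d = ∂_{(a}ℓ_{b)} + ℓ⁽²⁾U_{ab}`, which
are (1) and (2). For (3) and (4), differentiate `𝔸⁻¹𝔸 = 1` covariantly (the connection terms
cancel): the rows `(P, n)` of `𝔸⁻¹` satisfy `(∇̊P, ∇̊n) 𝔸 = −(P, n) ∇̊𝔸`, whose right side is
explicit by (1) and (2); multiplying by `𝔸⁻¹` gives the formulas. (5) holds because
`Γ̄ − Γ̊ = −n ⊗ Y` with `Y` symmetric.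
-/

namespace HypData

variable {m : ℕ}

lemma sum_mul_kd (T : Fin m → ℝ) (c : Fin m) : ∑ e, T e * kd e c = T c := by
  simp [kd]

lemma sum_mul_kd' (T : Fin m → ℝ) (b : Fin m) : ∑ e, T e * kd b e = T b := by
  simp [kd]

lemma sum_kd_mul (c : Fin m) (T : Fin m → ℝ) : ∑ e, kd e c * T e = T c := by
  simp [kd]

lemma kd_comm (a b : Fin m) : kd a b = kd b a := by
  simp only [kd, eq_comm]

section PartialDerivatives

variable {x : Fin m → ℝ}

lemma pd_congr {f g : Sc m} (h : f =ᶠ[nhds x] g) (a : Fin m) : pd a f x = pd a g x := by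
  rw [pd, pd, h.fderiv_eq]

lemma pd_eq_zero_of_eventually_const {f : Sc m} {c : ℝ} (h : ∀ᶠ y in nhds x, f y = c)
    (a : Fin m) : pd a f x = 0 := by
  rw [pd_congr (g := fun _ => c) h a]; simp [pd]

lemma pd_add {f g : Sc m} (hf : DifferentiableAt ℝ f x) (hg : DifferentiableAt ℝ g x)
    (a : Fin m) : pd a (fun y => f y + g y) x = pd a f x + pd a g x := by
  simp [pd, fderiv_fun_add hf hg]

lemma pd_mul {f g : Sc m} (hf : DifferentiableAt ℝ f x) (hg : DifferentiableAt ℝ g x)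
    (a : Fin m) : pd a (fun y => f y * g y) x = pd a f x * g x + f x * pd a g x := by
  simp [pd, fderiv_fun_mul hf hg]; ring

lemma pd_sum {f : Fin m → Sc m} (hf : ∀ i, DifferentiableAt ℝ (f i) x) (a : Fin m) :
    pd a (fun y => ∑ i, f i y) x = ∑ i, pd a (f i) x := by
  simp [pd, fderiv_fun_sum (fun i _ => hf i)]

lemma pd_sum_mul {f g : Fin m → Sc m} (hf : ∀ i, DifferentiableAt ℝ (f i) x)
    (hg : ∀ i, DifferentiableAt ℝ (g i) x) (a : Fin m) :
    pd a (fun y => ∑ i, f i y * g i y) x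
      = ∑ i, (pd a (f i) x * g i x + f i x * pd a (g i) x) := by
  rw [pd_sum (f := fun i y => f i y * g i y) fun i => (hf i).mul (hg i)]
  exact Finset.sum_congr rfl fun i _ => pd_mul (hf i) (hg i) a

lemma pd_sum_mul_add_mul_of_eventually_eq {f g : Fin m → Sc m} {h k : Sc m} {c : ℝ}
    (hf : ∀ i, DifferentiableAt ℝ (f i) x) (hg : ∀ i, DifferentiableAt ℝ (g i) x)
    (hh : DifferentiableAt ℝ h x) (hk : DifferentiableAt ℝ k x)
    (hrel : ∀ᶠ y in nhds x, (∑ i, f i y * g i y) + h y * k y = c) (a : Fin m) :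
    (∑ i, (pd a (f i) x * g i x + f i x * pd a (g i) x)) + pd a h x * k x + h x * pd a k x
      = 0 := by
  have h0 := pd_eq_zero_of_eventually_const hrel a
  rw [pd_add (DifferentiableAt.fun_sum fun i _ => (hf i).fun_mul (hg i)) (hh.fun_mul hk),
    pd_sum_mul hf hg, pd_mul hh hk] at h0
  linear_combination h0

end PartialDerivatives

section Smoothness

variable {U : Set (Fin m → ℝ)} {x : Fin m → ℝ}

lemma SmSc.differentiableAt {f : Sc m} (h : SmSc U f) (hU : IsOpen U) (hx : x ∈ U) :
    DifferentiableAt ℝ f x :=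
  (h.contDiffAt (hU.mem_nhds hx)).differentiableAt (by simp)

lemma SmVec.differentiableAt {f : Vec m} (h : SmVec U f) (hU : IsOpen U) (hx : x ∈ U)
    (a : Fin m) : DifferentiableAt ℝ (fun y => f y a) x :=
  SmSc.differentiableAt (h a) hU hx

lemma SmTen.differentiableAt {f : Ten m} (h : SmTen U f) (hU : IsOpen U) (hx : x ∈ U)
    (a b : Fin m) : DifferentiableAt ℝ (fun y => f y a b) x :=
  SmSc.differentiableAt (h a b) hU hx

end Smoothness

namespace MetricData

variable {U : Set (Fin m → ℝ)} {γ : Ten m} {ℓ : Vec m} {ℓ2 : Sc m} {P : Ten m} {n : Vec m}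
  {n2 : Sc m} {x : Fin m → ℝ}

lemma gamma_symm (hdata : MetricData U γ ℓ ℓ2 P n n2) (hx : x ∈ U) (a b : Fin m) :
    γ x a b = γ x b a :=
  hdata.2.2.2.2.2.2.1 x hx a b

lemma P_symm (hdata : MetricData U γ ℓ ℓ2 P n n2) (hx : x ∈ U) (a b : Fin m) :
    P x a b = P x b a :=
  hdata.2.2.2.2.2.2.2.1 x hx a b

lemma invBlocks (hdata : MetricData U γ ℓ ℓ2 P n n2) (hx : x ∈ U) :
    InvBlocks (γ x) (ℓ x) (ℓ2 x) (P x) (n x) (n2 x) :=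
  hdata.2.2.2.2.2.2.2.2 x hx

lemma pd_gamma_symm (hdata : MetricData U γ ℓ ℓ2 P n n2) (hU : IsOpen U) (hx : x ∈ U)
    (a b c : Fin m) : pd a (fun y => γ y b c) x = pd a (fun y => γ y c b) x :=
  pd_congr (Filter.eventually_of_mem (hU.mem_nhds hx) fun _ hy => hdata.gamma_symm hy b c) a

lemma pd_P_mul_gamma (hdata : MetricData U γ ℓ ℓ2 P n n2) (hU : IsOpen U) (hx : x ∈ U)
    (a b c : Fin m) :
    (∑ d, (pd a (fun y => P y b d) x * γ x d c + P x b d * pd a (fun y => γ y d c) x))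
      + pd a (fun y => n y b) x * ℓ x c + n x b * pd a (fun y => ℓ y c) x = 0 := by
  obtain ⟨hγ, hℓ, -, hP, hn, -, -, -, hinv⟩ := hdata
  exact pd_sum_mul_add_mul_of_eventually_eq (fun d => hP.differentiableAt hU hx b d)
    (fun d => hγ.differentiableAt hU hx d c) (hn.differentiableAt hU hx b)
    (hℓ.differentiableAt hU hx c)
    (Filter.eventually_of_mem (hU.mem_nhds hx) fun y hy => (hinv y hy).1 b c) a

lemma pd_P_mul_ell (hdata : MetricData U γ ℓ ℓ2 P n n2) (hU : IsOpen U) (hx : x ∈ U)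
    (a b : Fin m) :
    (∑ d, (pd a (fun y => P y b d) x * ℓ x d + P x b d * pd a (fun y => ℓ y d) x))
      + pd a ℓ2 x * n x b + ℓ2 x * pd a (fun y => n y b) x = 0 := by
  obtain ⟨-, hℓ, hℓ2, hP, hn, -, -, -, hinv⟩ := hdata
  exact pd_sum_mul_add_mul_of_eventually_eq (fun d => hP.differentiableAt hU hx b d)
    (hℓ.differentiableAt hU hx) (hℓ2.differentiableAt hU hx) (hn.differentiableAt hU hx b)
    (Filter.eventually_of_mem (hU.mem_nhds hx) fun y hy => (hinv y hy).2.1 b) a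

lemma pd_gamma_mul_n (hdata : MetricData U γ ℓ ℓ2 P n n2) (hU : IsOpen U) (hx : x ∈ U)
    (a b : Fin m) :
    (∑ d, (pd a (fun y => γ y b d) x * n x d + γ x b d * pd a (fun y => n y d) x))
      + pd a n2 x * ℓ x b + n2 x * pd a (fun y => ℓ y b) x = 0 := by
  obtain ⟨hγ, hℓ, -, -, hn, hn2, -, -, hinv⟩ := hdata
  exact pd_sum_mul_add_mul_of_eventually_eq (fun d => hγ.differentiableAt hU hx b d)
    (hn.differentiableAt hU hx) (hn2.differentiableAt hU hx) (hℓ.differentiableAt hU hx b)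
    (Filter.eventually_of_mem (hU.mem_nhds hx) fun y hy => (hinv y hy).2.2.2 b) a

end MetricData

namespace InvBlocks

variable {γ P : Fin m → Fin m → ℝ} {ℓ n : Fin m → ℝ} {ℓ2 n2 : ℝ}

lemma sum_P_mul_gamma (h : InvBlocks γ ℓ ℓ2 P n n2) (hP : ∀ a b, P a b = P b a) (e c : Fin m) :
    ∑ d, P d e * γ d c = kd e c - n e * ℓ c := by
  rw [← h.1 e c]
  simp only [hP _ e, add_sub_cancel_right]

lemma sum_P_mul_ell (h : InvBlocks γ ℓ ℓ2 P n n2) (hP : ∀ a b, P a b = P b a) (e : Fin m) :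
    ∑ d, P d e * ℓ d = -(ℓ2 * n e) := by
  rw [← sub_eq_zero, sub_neg_eq_add, ← h.2.1 e]
  simp only [hP _ e]

lemma sum_n_mul_gamma (h : InvBlocks γ ℓ ℓ2 P n n2) (hγ : ∀ a b, γ a b = γ b a) (c : Fin m) :
    ∑ d, n d * γ d c = -(n2 * ℓ c) := by
  rw [← sub_eq_zero, sub_neg_eq_add, ← h.2.2.2 c]
  simp only [hγ _ c, mul_comm]

lemma sum_n_mul_ell (h : InvBlocks γ ℓ ℓ2 P n n2) : ∑ d, n d * ℓ d = 1 - n2 * ℓ2 := by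
  rw [← h.2.2.1, add_sub_cancel_right]

variable {X R : Fin m → Fin m → ℝ} {v r : Fin m → ℝ}

/-- The hypotheses say `(X v) 𝔸 = (R r)` in components; this lemma and the next read off
`(X v) = (R r) 𝔸⁻¹`, using `𝔸 𝔸⁻¹ = 1`, which follows from `𝔸⁻¹ 𝔸 = 1` by symmetry. -/
lemma eq_sum_mul_P (h : InvBlocks γ ℓ ℓ2 P n n2) (hγ : ∀ a b, γ a b = γ b a)
    (hP : ∀ a b, P a b = P b a)
    (hXR : ∀ b c, (∑ d, X b d * γ d c) + v b * ℓ c = R b c)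
    (hvr : ∀ b, (∑ d, X b d * ℓ d) + ℓ2 * v b = r b) (b c : Fin m) :
    X b c = (∑ e, R b e * P e c) + r b * n c := by
  have hγP : ∀ d, (∑ e, γ d e * P e c) + ℓ d * n c = kd d c := fun d => by
    rw [kd_comm, ← h.1 c d, mul_comm (ℓ d)]
    congr 1
    exact Finset.sum_congr rfl fun e _ => by rw [hγ d e, hP e c, mul_comm]
  calc X b c = ∑ d, X b d * ((∑ e, γ d e * P e c) + ℓ d * n c) := by
        simp only [hγP, sum_mul_kd]
    _ = (∑ e, ((∑ d, X b d * γ d e) + v b * ℓ e) * P e c)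
          + ((∑ d, X b d * ℓ d) + ℓ2 * v b) * n c
          - v b * ((∑ e, P e c * ℓ e) + ℓ2 * n c) := by
        simp only [mul_add, add_mul, Finset.mul_sum, Finset.sum_mul, Finset.sum_add_distrib]
        rw [Finset.sum_comm]
        simp only [mul_left_comm, mul_comm]
        ring
    _ = _ := by rw [h.sum_P_mul_ell hP]; simp only [hXR, hvr]; ring

lemma eq_sum_mul_n (h : InvBlocks γ ℓ ℓ2 P n n2)
    (hXR : ∀ b c, (∑ d, X b d * γ d c) + v b * ℓ c = R b c)
    (hvr : ∀ b, (∑ d, X b d * ℓ d) + ℓ2 * v b = r b) (b : Fin m) :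
    v b = (∑ e, R b e * n e) + r b * n2 := by
  calc v b = v b * ((∑ e, n e * ℓ e) + n2 * ℓ2)
        + ∑ d, X b d * ((∑ e, γ d e * n e) + n2 * ℓ d) := by
        simp only [h.2.2.1, h.2.2.2, mul_one, mul_zero, Finset.sum_const_zero, add_zero]
    _ = (∑ e, ((∑ d, X b d * γ d e) + v b * ℓ e) * n e)
          + ((∑ d, X b d * ℓ d) + ℓ2 * v b) * n2 := by
        simp only [mul_add, add_mul, Finset.mul_sum, Finset.sum_mul, Finset.sum_add_distrib]
        rw [Finset.sum_comm]
        simp only [mul_left_comm, mul_comm]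
        ring
    _ = _ := by simp only [hXR, hvr]

end InvBlocks

section Leibniz

variable (Γ : Conn m) {P γ : Ten m} {n ℓ : Vec m} {ℓ2 : Sc m} {x : Fin m → ℝ}

/-- The connection terms cancel because `Pγ + n ⊗ ℓ` is the identity. -/
lemma leibniz_P_gamma (hA : ∀ b c, (∑ d, P x b d * γ x d c) + n x b * ℓ x c = kd b c)
    (a b c : Fin m) :
    (∑ d, (covD2U Γ P x a b d * γ x d c + P x b d * covD2 Γ γ x a d c))
      + covD1U Γ n x a b * ℓ x c + n x b * covD1 Γ ℓ x a c
    = (∑ d, (pd a (fun y => P y b d) x * γ x d c + P x b d * pd a (fun y => γ y d c) x))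
      + pd a (fun y => n y b) x * ℓ x c + n x b * pd a (fun y => ℓ y c) x := by
  have hleft : ∑ d, (∑ e, Γ x b a e * P x e d) * γ x d c + (∑ e, Γ x b a e * n x e) * ℓ x c
      = Γ x b a c := by
    calc _ = ∑ e, Γ x b a e * ((∑ d, P x e d * γ x d c) + n x e * ℓ x c) := by
          simp only [mul_add, Finset.mul_sum, Finset.sum_mul, Finset.sum_add_distrib]
          rw [Finset.sum_comm]
          ac_rfl
      _ = Γ x b a c := by simp only [hA, sum_mul_kd]
  have hright : ∑ d, P x b d * (∑ e, Γ x e a c * γ x d e) + n x b * ∑ e, Γ x e a c * ℓ x e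
      = Γ x b a c := by
    calc _ = ∑ e, Γ x e a c * ((∑ d, P x b d * γ x d e) + n x b * ℓ x e) := by
          simp only [mul_add, Finset.mul_sum, Finset.sum_add_distrib]
          rw [Finset.sum_comm]
          ac_rfl
      _ = Γ x b a c := by simp only [hA, sum_mul_kd']
  have hswap : ∑ d, (∑ e, Γ x d a e * P x b e) * γ x d c
      = ∑ d, P x b d * ∑ e, Γ x e a d * γ x e c := by
    simp only [Finset.sum_mul, Finset.mul_sum]
    rw [Finset.sum_comm]
    ac_rfl
  simp only [covD2U, covD2, covD1U, covD1, add_mul, mul_sub,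
    Finset.sum_add_distrib, Finset.sum_sub_distrib]
  linear_combination hleft - hright + hswap

/-- The connection terms cancel because `Pℓ + ℓ⁽²⁾n = 0`. -/
lemma leibniz_P_ell (hB : ∀ b, (∑ d, P x b d * ℓ x d) + ℓ2 x * n x b = 0) (a b : Fin m) :
    (∑ d, (covD2U Γ P x a b d * ℓ x d + P x b d * covD1 Γ ℓ x a d))
      + pd a ℓ2 x * n x b + ℓ2 x * covD1U Γ n x a b
    = (∑ d, (pd a (fun y => P y b d) x * ℓ x d + P x b d * pd a (fun y => ℓ y d) x))
      + pd a ℓ2 x * n x b + ℓ2 x * pd a (fun y => n y b) x := by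
  have hleft : ∑ d, (∑ e, Γ x b a e * P x e d) * ℓ x d + ℓ2 x * ∑ e, Γ x b a e * n x e = 0 := by
    calc _ = ∑ e, Γ x b a e * ((∑ d, P x e d * ℓ x d) + ℓ2 x * n x e) := by
          simp only [mul_add, Finset.mul_sum, Finset.sum_mul, Finset.sum_add_distrib]
          rw [Finset.sum_comm]
          ac_rfl
      _ = 0 := by simp only [hB, mul_zero, Finset.sum_const_zero]
  have hswap : ∑ d, (∑ e, Γ x d a e * P x b e) * ℓ x d
      = ∑ d, P x b d * ∑ e, Γ x e a d * ℓ x e := by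
    simp only [Finset.sum_mul, Finset.mul_sum]
    rw [Finset.sum_comm]
    ac_rfl
  simp only [covD2U, covD1U, covD1, add_mul, mul_add, mul_sub,
    Finset.sum_add_distrib, Finset.sum_sub_distrib]
  linear_combination hleft + hswap

end Leibniz

section MetricConnection

variable {U : Set (Fin m → ℝ)} {γ : Ten m} {ℓ : Vec m} {ℓ2 : Sc m} {P : Ten m} {n : Vec m}
  {n2 : Sc m} {x : Fin m → ℝ}

def christoffelFirst (γ : Ten m) (x : Fin m → ℝ) (a b d : Fin m) : ℝ :=
  (pd a (fun y => γ y b d) x + pd b (fun y => γ y a d) x - pd d (fun y => γ y a b) x) / 2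

def symmPd (ℓ : Vec m) (x : Fin m → ℝ) (a b : Fin m) : ℝ :=
  (pd a (fun y => ℓ y b) x + pd b (fun y => ℓ y a) x) / 2

lemma Gam0_eq_sum (c a b : Fin m) :
    Gam0 γ ℓ P n x c a b = ∑ d, P x c d * christoffelFirst γ x a b d + n x c * symmPd ℓ x a b := by
  simp only [Gam0, christoffelFirst, symmPd, Finset.sum_div, mul_div_assoc]

lemma pd_ell_eq_symmPd_add_Ff (a b : Fin m) :
    pd a (fun y => ℓ y b) x = symmPd ℓ x a b + Ff ℓ x a b := by
  rw [symmPd, Ff]; ring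

lemma sum_n_mul_christoffelFirst (hdata : MetricData U γ ℓ ℓ2 P n n2) (hU : IsOpen U)
    (hx : x ∈ U) (a b : Fin m) :
    ∑ d, n x d * christoffelFirst γ x a b d + n2 x * symmPd ℓ x a b
      = -Uf γ ℓ n n2 x a b := by
  have hab := hdata.pd_gamma_mul_n hU hx a b
  have hba := hdata.pd_gamma_mul_n hU hx b a
  have hsplit : ∑ d, n x d * christoffelFirst γ x a b d
      = ((∑ d, pd a (fun y => γ y b d) x * n x d) + (∑ d, pd b (fun y => γ y a d) x * n x d)
          - ∑ d, n x d * pd d (fun y => γ y a b) x) / 2 := by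
    rw [← Finset.sum_add_distrib, ← Finset.sum_sub_distrib, Finset.sum_div]
    exact Finset.sum_congr rfl fun d _ => by rw [christoffelFirst]; ring
  have hγ : ∑ c, γ x c b * pd a (fun y => n y c) x = ∑ d, γ x b d * pd a (fun y => n y d) x :=
    Finset.sum_congr rfl fun c _ => by rw [hdata.gamma_symm hx]
  rw [hsplit, symmPd, Uf, Finset.sum_add_distrib, Finset.sum_add_distrib, hγ]
  rw [Finset.sum_add_distrib] at hab hba
  linear_combination (hab + hba) / 2

lemma sum_Gam0_mul (w : Fin m → ℝ) (a b : Fin m) :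
    ∑ d, Gam0 γ ℓ P n x d a b * w d
      = ∑ e, (∑ d, P x d e * w d) * christoffelFirst γ x a b e
        + (∑ d, n x d * w d) * symmPd ℓ x a b := by
  simp only [Gam0_eq_sum, add_mul, Finset.sum_mul, Finset.sum_add_distrib]
  rw [Finset.sum_comm]
  ac_rfl

lemma sum_Gam0_mul_gamma (hdata : MetricData U γ ℓ ℓ2 P n n2) (hU : IsOpen U) (hx : x ∈ U)
    (a b c : Fin m) :
    ∑ d, Gam0 γ ℓ P n x d a b * γ x d c
      = christoffelFirst γ x a b c + ℓ x c * Uf γ ℓ n n2 x a b := by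
  have hinv := hdata.invBlocks hx
  rw [sum_Gam0_mul, ← neg_neg (Uf γ ℓ n n2 x a b), ← sum_n_mul_christoffelFirst hdata hU hx,
    hinv.sum_n_mul_gamma (hdata.gamma_symm hx)]
  simp only [hinv.sum_P_mul_gamma (hdata.P_symm hx), sub_mul, Finset.sum_sub_distrib, sum_kd_mul,
    mul_right_comm _ (ℓ x c), ← Finset.sum_mul]
  ring

lemma sum_Gam0_mul_ell (hdata : MetricData U γ ℓ ℓ2 P n n2) (hU : IsOpen U) (hx : x ∈ U)
    (a b : Fin m) :
    ∑ d, Gam0 γ ℓ P n x d a b * ℓ x d = symmPd ℓ x a b + ℓ2 x * Uf γ ℓ n n2 x a b := by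
  have hinv := hdata.invBlocks hx
  rw [sum_Gam0_mul, ← neg_neg (Uf γ ℓ n n2 x a b), ← sum_n_mul_christoffelFirst hdata hU hx,
    hinv.sum_n_mul_ell]
  simp only [hinv.sum_P_mul_ell (hdata.P_symm hx), neg_mul, mul_assoc, Finset.sum_neg_distrib,
    ← Finset.mul_sum]
  ring

lemma covD1_Gam0_ell (hdata : MetricData U γ ℓ ℓ2 P n n2) (hU : IsOpen U) (hx : x ∈ U)
    (a b : Fin m) :
    covD1 (Gam0 γ ℓ P n) ℓ x a b = Ff ℓ x a b - ℓ2 x * Uf γ ℓ n n2 x a b := by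
  rw [covD1, sum_Gam0_mul_ell hdata hU hx, pd_ell_eq_symmPd_add_Ff]
  ring

lemma covD2_Gam0_gamma (hdata : MetricData U γ ℓ ℓ2 P n n2) (hU : IsOpen U) (hx : x ∈ U)
    (a b c : Fin m) :
    covD2 (Gam0 γ ℓ P n) γ x a b c
      = -(ℓ x b * Uf γ ℓ n n2 x a c) - ℓ x c * Uf γ ℓ n n2 x a b := by
  have hpd : pd a (fun y => γ y b c) x
      = christoffelFirst γ x a b c + christoffelFirst γ x a c b := by
    rw [christoffelFirst, christoffelFirst, hdata.pd_gamma_symm hU hx a c b]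
    ring
  have hsymm : ∑ d, Gam0 γ ℓ P n x d a c * γ x b d = ∑ d, Gam0 γ ℓ P n x d a c * γ x d b :=
    Finset.sum_congr rfl fun d _ => by rw [hdata.gamma_symm hx]
  rw [covD2, hsymm, sum_Gam0_mul_gamma hdata hU hx, sum_Gam0_mul_gamma hdata hU hx, hpd]
  ring

lemma covD_Gam0_P_mul_gamma (hdata : MetricData U γ ℓ ℓ2 P n n2) (hU : IsOpen U) (hx : x ∈ U)
    (a b c : Fin m) :
    (∑ d, covD2U (Gam0 γ ℓ P n) P x a b d * γ x d c) + covD1U (Gam0 γ ℓ P n) n x a b * ℓ x c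
      = ℓ x c * (∑ d, P x b d * Uf γ ℓ n n2 x a d) - n x b * Ff ℓ x a c := by
  have h := leibniz_P_gamma (Gam0 γ ℓ P n) (hdata.invBlocks hx).1 a b c
  rw [hdata.pd_P_mul_gamma hU hx a b c] at h
  simp only [covD2_Gam0_gamma hdata hU hx, covD1_Gam0_ell hdata hU hx] at h
  have hsplit : ∑ d, (covD2U (Gam0 γ ℓ P n) P x a b d * γ x d c
        + P x b d * (-(ℓ x d * Uf γ ℓ n n2 x a c) - ℓ x c * Uf γ ℓ n n2 x a d))
      = (∑ d, covD2U (Gam0 γ ℓ P n) P x a b d * γ x d c)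
        - (∑ d, P x b d * ℓ x d) * Uf γ ℓ n n2 x a c
        - ℓ x c * ∑ d, P x b d * Uf γ ℓ n n2 x a d := by
    rw [Finset.sum_mul, Finset.mul_sum, ← Finset.sum_sub_distrib, ← Finset.sum_sub_distrib]
    exact Finset.sum_congr rfl fun d _ => by ring
  rw [hsplit] at h
  linear_combination h + Uf γ ℓ n n2 x a c * (hdata.invBlocks hx).2.1 b

lemma covD_Gam0_P_mul_ell (hdata : MetricData U γ ℓ ℓ2 P n n2) (hU : IsOpen U) (hx : x ∈ U)
    (a b : Fin m) :
    (∑ d, covD2U (Gam0 γ ℓ P n) P x a b d * ℓ x d) + ℓ2 x * covD1U (Gam0 γ ℓ P n) n x a b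
      = -(pd a ℓ2 x * n x b) - (∑ d, P x b d * Ff ℓ x a d)
        + ℓ2 x * ∑ d, P x b d * Uf γ ℓ n n2 x a d := by
  have h := leibniz_P_ell (Gam0 γ ℓ P n) (hdata.invBlocks hx).2.1 a b
  rw [hdata.pd_P_mul_ell hU hx a b] at h
  simp only [covD1_Gam0_ell hdata hU hx] at h
  have hsplit : ∑ d, (covD2U (Gam0 γ ℓ P n) P x a b d * ℓ x d
        + P x b d * (Ff ℓ x a d - ℓ2 x * Uf γ ℓ n n2 x a d))
      = (∑ d, covD2U (Gam0 γ ℓ P n) P x a b d * ℓ x d) + (∑ d, P x b d * Ff ℓ x a d)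
        - ℓ2 x * ∑ d, P x b d * Uf γ ℓ n n2 x a d := by
    rw [Finset.mul_sum, ← Finset.sum_add_distrib, ← Finset.sum_sub_distrib]
    exact Finset.sum_congr rfl fun d _ => by ring
  rw [hsplit] at h
  linear_combination h

lemma covD2U_Gam0_P (hdata : MetricData U γ ℓ ℓ2 P n n2) (hU : IsOpen U) (hx : x ∈ U)
    (a b c : Fin m) :
    covD2U (Gam0 γ ℓ P n) P x a b c
      = -(∑ f, (n x b * P x c f + n x c * P x b f) * Ff ℓ x a f) - n x b * n x c * pd a ℓ2 x := by
  have hinv := hdata.invBlocks hx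
  rw [hinv.eq_sum_mul_P (hdata.gamma_symm hx) (hdata.P_symm hx)
    (covD_Gam0_P_mul_gamma hdata hU hx a) (covD_Gam0_P_mul_ell hdata hU hx a)]
  have hR : ∑ e, (ℓ x e * (∑ d, P x b d * Uf γ ℓ n n2 x a d) - n x b * Ff ℓ x a e) * P x e c
      = (∑ e, P x e c * ℓ x e) * (∑ d, P x b d * Uf γ ℓ n n2 x a d)
        - n x b * ∑ f, P x c f * Ff ℓ x a f := by
    rw [Finset.sum_mul, Finset.mul_sum, ← Finset.sum_sub_distrib]
    exact Finset.sum_congr rfl fun e _ => by rw [hdata.P_symm hx e c]; ring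
  have hF : ∑ f, (n x b * P x c f + n x c * P x b f) * Ff ℓ x a f
      = n x b * (∑ f, P x c f * Ff ℓ x a f) + n x c * ∑ f, P x b f * Ff ℓ x a f := by
    rw [Finset.mul_sum, Finset.mul_sum, ← Finset.sum_add_distrib]
    exact Finset.sum_congr rfl fun f _ => by ring
  rw [hR, hF, hinv.sum_P_mul_ell (hdata.P_symm hx)]
  ring

lemma covD1U_Gam0_n (hdata : MetricData U γ ℓ ℓ2 P n n2) (hU : IsOpen U) (hx : x ∈ U)
    (a b : Fin m) :
    covD1U (Gam0 γ ℓ P n) n x a b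
      = -(n2 x * n x b * pd a ℓ2 x) - (∑ f, (n2 x * P x b f + n x b * n x f) * Ff ℓ x a f)
        + ∑ f, P x b f * Uf γ ℓ n n2 x a f := by
  have hinv := hdata.invBlocks hx
  rw [hinv.eq_sum_mul_n (covD_Gam0_P_mul_gamma hdata hU hx a) (covD_Gam0_P_mul_ell hdata hU hx a)]
  have hR : ∑ e, (ℓ x e * (∑ d, P x b d * Uf γ ℓ n n2 x a d) - n x b * Ff ℓ x a e) * n x e
      = (∑ e, n x e * ℓ x e) * (∑ d, P x b d * Uf γ ℓ n n2 x a d)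
        - n x b * ∑ f, n x f * Ff ℓ x a f := by
    rw [Finset.sum_mul, Finset.mul_sum, ← Finset.sum_sub_distrib]
    exact Finset.sum_congr rfl fun e _ => by ring
  have hF : ∑ f, (n2 x * P x b f + n x b * n x f) * Ff ℓ x a f
      = n2 x * (∑ f, P x b f * Ff ℓ x a f) + n x b * ∑ f, n x f * Ff ℓ x a f := by
    rw [Finset.mul_sum, Finset.mul_sum, ← Finset.sum_add_distrib]
    exact Finset.sum_congr rfl fun f _ => by ring
  rw [hR, hF, hinv.sum_n_mul_ell]
  ring

end MetricConnection

section ShiftedConnection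

variable (Γ : Conn m) (n : Vec m) (Y Z : Ten m) (x : Fin m → ℝ)

lemma covD2_sub_mul (a b c : Fin m) :
    covD2 (fun x c a b => Γ x c a b - n x c * Y x a b) Z x a b c
      = covD2 Γ Z x a b c + Y x a b * (∑ e, n x e * Z x e c)
        + Y x a c * ∑ e, n x e * Z x b e := by
  simp only [covD2, sub_mul, Finset.sum_sub_distrib, mul_right_comm (n x _) (Y x _ _),
    ← Finset.sum_mul]
  ring

lemma covD2_sub_mul_antisymm (hY : ∀ a b, Y x a b = Y x b a) (b c d : Fin m) :
    covD2 (fun x c a b => Γ x c a b - n x c * Y x a b) Z x d b c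
        - covD2 (fun x c a b => Γ x c a b - n x c * Y x a b) Z x c b d
      = covD2 Γ Z x d b c - covD2 Γ Z x c b d
        + ∑ f, n x f * (Y x b d * Z x f c - Y x b c * Z x f d) := by
  have hsplit : ∑ f, n x f * (Y x b d * Z x f c - Y x b c * Z x f d)
      = Y x b d * (∑ f, n x f * Z x f c) - Y x b c * ∑ f, n x f * Z x f d := by
    rw [Finset.mul_sum, Finset.mul_sum, ← Finset.sum_sub_distrib]
    exact Finset.sum_congr rfl fun f _ => by ring
  rw [covD2_sub_mul, covD2_sub_mul, hsplit, hY d b, hY c b, hY c d]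
  ring

end ShiftedConnection

end HypData

open HypData in
theorem statement11_general (m : ℕ) (U : Set (Fin m → ℝ)) (hU : IsOpen U)
    (γ : Ten m) (ℓ : Vec m) (ℓ2 : Sc m) (P : Ten m) (n : Vec m) (n2 : Sc m)
    (hdata : MetricData U γ ℓ ℓ2 P n n2)
    (Y : Ten m) (hYs : ∀ x ∈ U, ∀ a b, Y x a b = Y x b a) :
    -- (1) ∇̊_aℓ_b = F_{ab} − ℓ⁽²⁾U_{ab}
    ((∀ x ∈ U, ∀ a b,
      covD1 (Gam0 γ ℓ P n) ℓ x a b = Ff ℓ x a b - ℓ2 x * Uf γ ℓ n n2 x a b)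
    -- (2) ∇̊_aγ_{bc} = −ℓ_bU_{ac} − ℓ_cU_{ab}
    ∧ (∀ x ∈ U, ∀ a b c,
      covD2 (Gam0 γ ℓ P n) γ x a b c
        = -(ℓ x b * Uf γ ℓ n n2 x a c) - ℓ x c * Uf γ ℓ n n2 x a b)
    -- (3) ∇̊_aP^{bc} = −(n^bP^{cf} + n^cP^{bf})F_{af} − n^bn^c∂_aℓ⁽²⁾
    ∧ (∀ x ∈ U, ∀ a b c,
      covD2U (Gam0 γ ℓ P n) P x a b c
        = -(∑ f, (n x b * P x c f + n x c * P x b f) * Ff ℓ x a f)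
          - n x b * n x c * pd a ℓ2 x)
    -- (4) ∇̊_an^b = −n⁽²⁾n^b∂_aℓ⁽²⁾ − (n⁽²⁾P^{bf} + n^bn^f)F_{af} + P^{bf}U_{af}
    ∧ (∀ x ∈ U, ∀ a b,
      covD1U (Gam0 γ ℓ P n) n x a b
        = -(n2 x * n x b * pd a ℓ2 x)
          - (∑ f, (n2 x * P x b f + n x b * n x f) * Ff ℓ x a f)
          + (∑ f, P x b f * Uf γ ℓ n n2 x a f))
    -- (5) relation between the antisymmetrised ∇̄ and ∇̊ derivatives of a symmetric Z
    ∧ (∀ Z : Ten m, SmTen U Z → (∀ x ∈ U, ∀ a b, Z x a b = Z x b a) →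
        ∀ x ∈ U, ∀ b c d,
        covD2 (GamB γ ℓ P n Y) Z x d b c - covD2 (GamB γ ℓ P n Y) Z x c b d
          = covD2 (Gam0 γ ℓ P n) Z x d b c - covD2 (Gam0 γ ℓ P n) Z x c b d
            + ∑ f, n x f * (Y x b d * Z x f c - Y x b c * Z x f d))) :=
  ⟨fun _ hx => covD1_Gam0_ell hdata hU hx,
   fun _ hx => covD2_Gam0_gamma hdata hU hx,
   fun _ hx => covD2U_Gam0_P hdata hU hx,
   fun _ hx => covD1U_Gam0_n hdata hU hx,
   fun Z _ _ x hx => covD2_sub_mul_antisymm (Gam0 γ ℓ P n) n Y Z x (hYs x hx)⟩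

open HypData in
/-- Lemma 6 of the paper, identities for the metric hypersurface
connection `∇̊` and the relation between `∇̄` and `∇̊` antisymmetrised derivatives. -/
theorem statement11 (m : ℕ) (hm : 1 ≤ m) (U : Set (Fin m → ℝ)) (hU : IsOpen U)
    (γ : Ten m) (ℓ : Vec m) (ℓ2 : Sc m) (P : Ten m) (n : Vec m) (n2 : Sc m)
    (hdata : MetricData U γ ℓ ℓ2 P n n2)
    (Y : Ten m) (hYsm : SmTen U Y) (hYs : ∀ x ∈ U, ∀ a b, Y x a b = Y x b a) :
    -- (1) ∇̊_aℓ_b = F_{ab} − ℓ⁽²⁾U_{ab}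
    ((∀ x ∈ U, ∀ a b,
      covD1 (Gam0 γ ℓ P n) ℓ x a b = Ff ℓ x a b - ℓ2 x * Uf γ ℓ n n2 x a b)
    -- (2) ∇̊_aγ_{bc} = −ℓ_bU_{ac} − ℓ_cU_{ab}
    ∧ (∀ x ∈ U, ∀ a b c,
      covD2 (Gam0 γ ℓ P n) γ x a b c
        = -(ℓ x b * Uf γ ℓ n n2 x a c) - ℓ x c * Uf γ ℓ n n2 x a b)
    -- (3) ∇̊_aP^{bc} = −(n^bP^{cf} + n^cP^{bf})F_{af} − n^bn^c∂_aℓ⁽²⁾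
    ∧ (∀ x ∈ U, ∀ a b c,
      covD2U (Gam0 γ ℓ P n) P x a b c
        = -(∑ f, (n x b * P x c f + n x c * P x b f) * Ff ℓ x a f)
          - n x b * n x c * pd a ℓ2 x)
    -- (4) ∇̊_an^b = −n⁽²⁾n^b∂_aℓ⁽²⁾ − (n⁽²⁾P^{bf} + n^bn^f)F_{af} + P^{bf}U_{af}
    ∧ (∀ x ∈ U, ∀ a b,
      covD1U (Gam0 γ ℓ P n) n x a b
        = -(n2 x * n x b * pd a ℓ2 x)
          - (∑ f, (n2 x * P x b f + n x b * n x f) * Ff ℓ x a f)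
          + (∑ f, P x b f * Uf γ ℓ n n2 x a f))
    -- (5) relation between the antisymmetrised ∇̄ and ∇̊ derivatives of a symmetric Z
    ∧ (∀ Z : Ten m, SmTen U Z → (∀ x ∈ U, ∀ a b, Z x a b = Z x b a) →
        ∀ x ∈ U, ∀ b c d,
        covD2 (GamB γ ℓ P n Y) Z x d b c - covD2 (GamB γ ℓ P n Y) Z x c b d
          = covD2 (Gam0 γ ℓ P n) Z x d b c - covD2 (Gam0 γ ℓ P n) Z x c b d
            + ∑ f, n x f * (Y x b d * Z x f c - Y x b c * Z x f d))) :=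
  statement11_general m U hU γ ℓ ℓ2 P n n2 hdata Y hYs
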